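/- Let k ≥ 1, let h_1, …, h_k ≥ 1 and let a^i_j (1 ≤ i ≤ k, 1 ≤ j ≤ h_i) be integers with every a^i_j ≥ 2, and set p_i = D(a^i_1, …, a^i_{h_i}) and q_i = D(a^i_2, …, a^i_{h_i}). Let Q_L be the block-diagonal symmetric integer matrix of size h_1 + ⋯ + h_k whose i-th block is the h_i×h_i tridiagonal matrix with diagonal a^i_1, …, a^i_{h_i} and entries −1 immediately above and below the diagonal (the intersection matrix of the disjoint union of the weighted linear chains representing the fractions p_1/q_1, …, p_k/q_k). Suppose m ≥ 1 and M is an (h_1 + ⋯ + h_k) × m integer matrix with M·Mᵀ = Q_L, and suppose there is a column index c such that for every i ∈ {1, …, k} the entry of M in column c and in the row corresponding to the starting vertex of the i-th chain (the vertex with weight a^i_1) is nonzero. Then ∑_{i=1}^k q_i/p_i ≤ 1; moreover, if ∑_{i=1}^k q_i/p_i = 1, then for every i that entry of M equals ±1. -/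

import Mathlib

open Matrix

/-- Tridiagonal determinant `D(a_1, …, a_n)`. -/
def D : List ℤ → ℤ
  | [] => 1
  | [a] => a
  | a :: b :: l => a * D (b :: l) - D l

/-- The `n×n` tridiagonal matrix with diagonal entries `a_1, …, a_n` and entries `−1`
immediately above and below the diagonal. -/
def tridiag {n : ℕ} (a : Fin n → ℤ) : Matrix (Fin n) (Fin n) ℤ :=
  Matrix.of fun i j =>
    if i = j then a i
    else if (i : ℕ) + 1 = (j : ℕ) ∨ (j : ℕ) + 1 = (i : ℕ) then -1 else 0

/-- The block-diagonal intersection matrix of the disjoint union of the weighted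
linear chains with weight sequences `a^i_1, …, a^i_{l i}`. -/
def QL {k : ℕ} (l : Fin k → ℕ) (a : ∀ i, Fin (l i) → ℤ) :
    Matrix (Σ i, Fin (l i)) (Σ i, Fin (l i)) ℤ :=
  Matrix.of fun p q =>
    if h : p.1 = q.1 then tridiag (a p.1) p.2 (Fin.cast (by rw [h]) q.2) else 0

lemma D_nil : D [] = 1 := rfl
lemma D_single (a : ℤ) : D [a] = a := rfl
lemma D_cons2 (a b : ℤ) (l : List ℤ) : D (a :: b :: l) = a * D (b :: l) - D l := rfl

lemma D_cons' (a : ℤ) {l : List ℤ} (h : l ≠ []) :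
    D (a :: l) = a * D l - D l.tail := by
  cases l with
  | nil => simp at h
  | cons b t => rfl

/-- combined positivity facts -/
lemma D_facts : ∀ (l : List ℤ), (∀ b ∈ l, 2 ≤ b) →
    1 ≤ D l ∧ D l.tail ≤ D l ∧ (l ≠ [] → D l.tail + 1 ≤ D l) := by
  intro l
  induction l with
  | nil => intro _; simp [D_nil]
  | cons a t ih =>
    intro h2
    have ha : 2 ≤ a := h2 a (by simp)
    have ht : ∀ b ∈ t, 2 ≤ b := fun b hb => h2 b (by simp [hb])
    obtain ⟨h1, h2', h3⟩ := ih ht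
    cases t with
    | nil =>
      refine ⟨?_, ?_, ?_⟩ <;> simp [D_nil, D_single] <;> omega
    | cons b s =>
      have hst := h3 (by simp)
      have key : D s + 1 ≤ D (b :: s) := hst
      have hD : D (a :: b :: s) = a * D (b :: s) - D s := rfl
      constructor
      · nlinarith
      constructor
      · simp only [List.tail_cons, hD]; nlinarith
      · intro _; simp only [List.tail_cons, hD]; nlinarith

lemma D_pos {l : List ℤ} (h2 : ∀ b ∈ l, 2 ≤ b) : 1 ≤ D l := (D_facts l h2).1

lemma D_tail_le {l : List ℤ} (h2 : ∀ b ∈ l, 2 ≤ b) : D l.tail ≤ D l := (D_facts l h2).2.1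

lemma D_tail_lt {l : List ℤ} (h2 : ∀ b ∈ l, 2 ≤ b) (h : l ≠ []) :
    D l.tail + 1 ≤ D l := (D_facts l h2).2.2 h

lemma D_super {a : ℤ} {l : List ℤ} (h2 : ∀ b ∈ (a :: l), 2 ≤ b) :
    2 * D l - D l.tail ≤ D (a :: l) := by
  have ha : 2 ≤ a := h2 a (by simp)
  have ht : ∀ b ∈ l, 2 ≤ b := fun b hb => h2 b (by simp [hb])
  have h1 := D_pos ht
  cases l with
  | nil => simp [D_nil, D_single]; omega
  | cons b s =>
    rw [D_cons' a (by simp)]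
    nlinarith
noncomputable def lT : List ℤ → List ℝ → ℝ
  | [], _ => 0
  | _ :: _, [] => 0
  | A :: l, u :: v => ((D l : ℝ) / (D (A :: l) : ℝ)) * (u + lT l v)

noncomputable def lG : List ℤ → List ℝ → ℝ
  | [], _ => 0
  | _ :: _, [] => 0
  | A :: l, u :: v => ((D l : ℝ) / (D (A :: l) : ℝ)) * (u + lT l v) ^ 2 + lG l v

def af (s : ℝ) : List ℝ → List ℝ
  | [] => []
  | x :: xs => (x + s) :: xs

def ldot : List ℝ → List ℝ → ℝ
  | x :: xs, y :: ys => x * y + ldot xs ys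
  | _, _ => 0

noncomputable def lA : List ℤ → List ℝ → List ℝ
  | A :: l, x :: xs => ((A : ℝ) * x - xs.headI) :: af (-x) (lA l xs)
  | _, _ => []

noncomputable def lX : List ℤ → List ℝ → List ℝ
  | A :: l, u :: v =>
      ((D l : ℝ) / (D (A :: l) : ℝ)) * (u + lT l v) ::
        lX l (af (((D l : ℝ) / (D (A :: l) : ℝ)) * (u + lT l v)) v)
  | _, _ => []

@[simp] lemma lT_nil (u : List ℝ) : lT [] u = 0 := rfl
@[simp] lemma lT_nil' (A : ℤ) (l : List ℤ) : lT (A :: l) [] = 0 := rfl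
@[simp] lemma lT_cons (A : ℤ) (l : List ℤ) (u : ℝ) (v : List ℝ) :
    lT (A :: l) (u :: v) = ((D l : ℝ) / (D (A :: l) : ℝ)) * (u + lT l v) := rfl
@[simp] lemma lG_nil (u : List ℝ) : lG [] u = 0 := rfl
@[simp] lemma lG_nil' (A : ℤ) (l : List ℤ) : lG (A :: l) [] = 0 := rfl
@[simp] lemma lG_cons (A : ℤ) (l : List ℤ) (u : ℝ) (v : List ℝ) :
    lG (A :: l) (u :: v) =
      ((D l : ℝ) / (D (A :: l) : ℝ)) * (u + lT l v) ^ 2 + lG l v := rfl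
@[simp] lemma ldot_nil (v : List ℝ) : ldot [] v = 0 := rfl
@[simp] lemma ldot_nil' (x : ℝ) (xs : List ℝ) : ldot (x :: xs) [] = 0 := rfl
@[simp] lemma ldot_cons (x y : ℝ) (xs ys : List ℝ) :
    ldot (x :: xs) (y :: ys) = x * y + ldot xs ys := rfl
@[simp] lemma lA_nil (u : List ℝ) : lA [] u = [] := rfl
@[simp] lemma lA_nil' (A : ℤ) (l : List ℤ) : lA (A :: l) [] = [] := rfl
@[simp] lemma lA_cons (A : ℤ) (l : List ℤ) (x : ℝ) (xs : List ℝ) :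
    lA (A :: l) (x :: xs) = ((A : ℝ) * x - xs.headI) :: af (-x) (lA l xs) := rfl
@[simp] lemma lX_nil (u : List ℝ) : lX [] u = [] := rfl
@[simp] lemma lX_nil' (A : ℤ) (l : List ℤ) : lX (A :: l) [] = [] := rfl
lemma lX_cons (A : ℤ) (l : List ℤ) (u : ℝ) (v : List ℝ) :
    lX (A :: l) (u :: v) = ((D l : ℝ) / (D (A :: l) : ℝ)) * (u + lT l v) ::
        lX l (af (((D l : ℝ) / (D (A :: l) : ℝ)) * (u + lT l v)) v) := rfl
@[simp] lemma af_nil (s : ℝ) : af s [] = [] := rfl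
@[simp] lemma af_cons (s x : ℝ) (xs : List ℝ) : af s (x :: xs) = (x + s) :: xs := rfl

lemma af_af (s r : ℝ) (w : List ℝ) : af s (af r w) = af (r + s) w := by
  cases w <;> simp [add_assoc]

@[simp] lemma af_zero (w : List ℝ) : af 0 w = w := by cases w <;> simp

@[simp] lemma af_length (s : ℝ) (w : List ℝ) : (af s w).length = w.length := by
  cases w <;> simp

-- real cast positivity
lemma DR_pos {l : List ℤ} (h2 : ∀ b ∈ l, 2 ≤ b) : (0 : ℝ) < (D l : ℝ) := by
  exact_mod_cast lt_of_lt_of_le one_pos (by exact_mod_cast D_pos h2)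

lemma h2_tail {A : ℤ} {l : List ℤ} (h2 : ∀ b ∈ (A :: l), 2 ≤ b) : ∀ b ∈ l, 2 ≤ b :=
  fun b hb => h2 b (by simp [hb])

lemma lG_nonneg : ∀ (l : List ℤ) (u : List ℝ), (∀ b ∈ l, 2 ≤ b) → 0 ≤ lG l u := by
  intro l
  induction l with
  | nil => intro u _; simp
  | cons A t ih =>
    intro u h2
    cases u with
    | nil => simp
    | cons u1 v =>
      have h1 : (0:ℝ) < (D t : ℝ) := DR_pos (h2_tail h2)
      have h1' : (0:ℝ) < (D (A :: t) : ℝ) := DR_pos h2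
      have := ih v (h2_tail h2)
      simp only [lG_cons]
      positivity

/-- Cauchy–Schwarz style bound, multiplied form. -/
lemma lG_cs : ∀ (l : List ℤ) (u : List ℝ), (∀ b ∈ l, 2 ≤ b) →
    (lT l u) ^ 2 * (D l : ℝ) ≤ lG l u * (D l.tail : ℝ) := by
  intro l u h2
  cases l with
  | nil => simp
  | cons A t =>
    cases u with
    | nil => simp
    | cons u1 v =>
      have hq : (0:ℝ) < (D t : ℝ) := DR_pos (h2_tail h2)
      have hp : (0:ℝ) < (D (A :: t) : ℝ) := DR_pos h2
      have hG := lG_nonneg t v (h2_tail h2)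
      simp only [lT_cons, lG_cons, List.tail_cons]
      have e1 : (((D t : ℝ) / (D (A :: t) : ℝ)) * (u1 + lT t v)) ^ 2 * (D (A :: t) : ℝ)
          = ((D t : ℝ) / (D (A :: t) : ℝ)) * (u1 + lT t v) ^ 2 * (D t : ℝ) := by
        field_simp
      rw [e1]
      nlinarith

/-- first-entry shift of T -/
lemma lT_af {l : List ℤ} {u : List ℝ} (hl : l ≠ []) (hu : u ≠ []) (s : ℝ) :
    lT l (af s u) = lT l u + s * ((D l.tail : ℝ) / (D l : ℝ)) := by
  cases l with
  | nil => simp at hl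
  | cons A t =>
    cases u with
    | nil => simp at hu
    | cons u1 v => simp only [af_cons, lT_cons, List.tail_cons]; ring

/-- first-entry shift of G -/
lemma lG_af {l : List ℤ} {u : List ℝ} (hl : l ≠ []) (hu : u ≠ []) (s : ℝ) :
    lG l (af s u) = lG l u + 2 * s * lT l u + s ^ 2 * ((D l.tail : ℝ) / (D l : ℝ)) := by
  cases l with
  | nil => simp at hl
  | cons A t =>
    cases u with
    | nil => simp at hu
    | cons u1 v => simp only [af_cons, lG_cons, lT_cons, List.tail_cons]; ring

@[simp] lemma headI_nil_real : ([] : List ℝ).headI = 0 := rfl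
@[simp] lemma real_default_eq : (default : ℝ) = 0 := rfl

lemma ldot_af {v : List ℝ} {w : List ℝ} (hw : w ≠ []) (s : ℝ) :
    ldot v (af s w) = ldot v w + s * v.headI := by
  cases w with
  | nil => simp at hw
  | cons y ys =>
    cases v with
    | nil => simp
    | cons x xs => simp; ring

@[simp] lemma lX_head : ∀ (l : List ℤ) (u : List ℝ), (lX l u).headI = lT l u := by
  intro l u
  cases l with
  | nil => simp
  | cons A t => cases u with
    | nil => simp
    | cons u1 v => simp [lX_cons]

lemma lX_length : ∀ (l : List ℤ) (u : List ℝ), u.length = l.length →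
    (lX l u).length = l.length := by
  intro l
  induction l with
  | nil => intro u h; simp
  | cons A t ih =>
    intro u h
    cases u with
    | nil => simp at h
    | cons u1 v =>
      simp only [lX_cons, List.length_cons]
      rw [ih _ (by simpa using (by simpa [List.length_cons] using h : v.length = t.length))]

lemma lX_solve : ∀ (l : List ℤ) (u : List ℝ), (∀ b ∈ l, 2 ≤ b) →
    u.length = l.length → lA l (lX l u) = u := by
  intro l
  induction l with
  | nil => intro u h2 h; cases u with
    | nil => simp
    | cons x xs => simp at h
  | cons A t ih =>
    intro u h2 h
    cases u with
    | nil => simp at h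
    | cons u1 v =>
      have hlen : v.length = t.length := by simpa using h
      have ht2 := h2_tail h2
      have hq : (0:ℝ) < (D t : ℝ) := DR_pos ht2
      have hp : (0:ℝ) < (D (A :: t) : ℝ) := DR_pos h2
      rw [lX_cons, lA_cons]
      set x1 : ℝ := ((D t : ℝ) / (D (A :: t) : ℝ)) * (u1 + lT t v) with hx1
      have hrec : lA t (lX t (af x1 v)) = af x1 v := by
        apply ih _ ht2
        simp [hlen]
      rw [hrec, lX_head]
      cases t with
      | nil =>
        cases v with
        | nil =>
          have hA : (2:ℝ) ≤ (A:ℝ) := by exact_mod_cast h2 A (by simp)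
          simp only [lX_nil, lA_nil, af_nil, headI_nil_real]
          rw [hx1]
          simp only [lT_nil, add_zero, D_nil, D_single, Int.cast_one, sub_zero]
          congr 1
          field_simp
        | cons _ _ => simp at hlen
      | cons B s =>
        cases v with
        | nil => simp at hlen
        | cons v1 w =>
          rw [lT_af (by simp) (by simp) x1]
          have hDc : ((D (A :: B :: s)) : ℝ) = (A : ℝ) * (D (B :: s) : ℝ) - (D s : ℝ) := by
            rw [D_cons2]; push_cast; ring
          have hq' : (0:ℝ) < (D (B :: s) : ℝ) := DR_pos ht2
          have habs : (A : ℝ) * x1 - (lT (B :: s) (v1 :: w)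
              + x1 * ((D (B :: s).tail : ℝ) / (D (B :: s) : ℝ))) = u1 := by
            rw [hx1, List.tail_cons, hDc]
            have hpne : (A : ℝ) * (D (B :: s) : ℝ) - (D s : ℝ) ≠ 0 := by
              rw [← hDc]; positivity
            field_simp
            ring
          rw [habs, af_af]
          simp

lemma lX_dot : ∀ (l : List ℤ) (u : List ℝ), (∀ b ∈ l, 2 ≤ b) →
    u.length = l.length → ldot (lX l u) u = lG l u := by
  intro l
  induction l with
  | nil => intro u h2 h; cases u with
    | nil => simp
    | cons x xs => simp at h
  | cons A t ih =>
    intro u h2 h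
    cases u with
    | nil => simp at h
    | cons u1 v =>
      have hlen : v.length = t.length := by simpa using h
      have ht2 := h2_tail h2
      have hq : (0:ℝ) < (D t : ℝ) := DR_pos ht2
      have hp : (0:ℝ) < (D (A :: t) : ℝ) := DR_pos h2
      rw [lX_cons, ldot_cons, lG_cons]
      set x1 : ℝ := ((D t : ℝ) / (D (A :: t) : ℝ)) * (u1 + lT t v) with hx1
      cases t with
      | nil =>
        cases v with
        | nil => rw [hx1]; simp; ring
        | cons _ _ => simp at hlen
      | cons B s =>
        cases v with
        | nil => simp at hlen
        | cons v1 w =>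
          have hvne : (v1 :: w) ≠ ([] : List ℝ) := by simp
          have hrec : ldot (lX (B :: s) (af x1 (v1 :: w))) (af x1 (v1 :: w))
              = lG (B :: s) (af x1 (v1 :: w)) := by
            apply ih _ ht2; simpa using hlen
          have hdot2 : ldot (lX (B :: s) (af x1 (v1 :: w))) (v1 :: w)
              = lG (B :: s) (af x1 (v1 :: w)) - x1 * lT (B :: s) (af x1 (v1 :: w)) := by
            have h5 := ldot_af (v := lX (B :: s) (af x1 (v1 :: w)))
              (w := af x1 (v1 :: w)) (by simp) (-x1)
            rw [af_af] at h5
            simp only [add_neg_cancel, af_zero] at h5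
            rw [h5, hrec, lX_head]
            ring
          rw [hdot2, lG_af (by simp) hvne, lT_af (by simp) hvne]
          simp only [List.tail_cons]
          rw [hx1]
          ring

section Key

variable {p q q' E s t u1 G' : ℝ}

/-- affine inequality ψ -/
lemma psiB (hq' : 1 ≤ q') (hq : q' + 1 ≤ q) (hsuper : 2*q - q' ≤ p)
    (hs : 0 ≤ s) (hs1 : s ≤ 1) (hsq : s * q ≤ q') :
    2*q*q'*(1-s) ≤ (2*q' - s*q) * p := by
  rcases le_or_gt (3*q') (2*q) with hc | hc
  · nlinarith [mul_nonneg (sub_nonneg.2 hsq) (sub_nonneg.2 hc),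
      mul_nonneg (by nlinarith : (0:ℝ) ≤ 2*q' - s*q) (by nlinarith : (0:ℝ) ≤ p - (2*q - q')),
      sq_nonneg q']
  · nlinarith [mul_nonneg (by nlinarith : (0:ℝ) ≤ 2*q' - s*q) (by nlinarith : (0:ℝ) ≤ p - (2*q - q')),
      mul_nonneg (mul_nonneg hs (by nlinarith : (0:ℝ) ≤ q)) (by nlinarith : (0:ℝ) ≤ 3*q' - 2*q),
      mul_nonneg (by nlinarith : (0:ℝ) ≤ q') (by nlinarith : (0:ℝ) ≤ q - q')]

lemma psiL (hq' : 1 ≤ q') (hq : q' + 1 ≤ q) (hsuper : 2*q - q' ≤ p)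
    (hs : 0 ≤ s) (hsq : s * q ≤ q') :
    q*q'*(2-s) ≤ (2*q' - s*q) * p := by
  nlinarith [mul_nonneg (by nlinarith : (0:ℝ) ≤ 2*q' - s*q) (by nlinarith : (0:ℝ) ≤ p - (2*q - q')),
    mul_nonneg (by nlinarith : (0:ℝ) ≤ q - q') (sub_nonneg.2 hsq)]

lemma innerB (hq' : 1 ≤ q') (hq : q' + 1 ≤ q) (hp : q + 1 ≤ p) (hsuper : 2*q - q' ≤ p)
    (hE0 : 0 ≤ E)
    (hE1 : s^2*q ≤ E*q') (hE2 : 2*s*q' - s^2*q ≤ E*q')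
    (hs : 0 ≤ s) (hs1 : s ≤ 1) :
    2*q*s*(1-s) ≤ E*p := by
  have hq'0 : (0:ℝ) < q' := by linarith
  have hq0 : (0:ℝ) < q := by linarith
  have hp0 : (0:ℝ) < p := by linarith
  rcases le_or_gt q' (s*q) with hc | hc
  · -- use hE1 : E*q' ≥ s^2*q ; suffices s^2*q*p ≥ 2*q*s*(1-s)*q'
    have key : 2*q*s*(1-s)*q' ≤ s^2*q*p := by
      nlinarith [mul_nonneg (mul_nonneg hs hq0.le) (sub_nonneg.2 hc),
        mul_nonneg (mul_nonneg (mul_nonneg hs hs) hq0.le) (by nlinarith : (0:ℝ) ≤ p - (2*q - 2*q'))]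
    nlinarith [mul_le_mul_of_nonneg_right hE1 hp0.le]
  · -- use hE2 and psiB
    have hpsi := psiB hq' hq hsuper hs hs1 hc.le
    have key : 2*q*s*(1-s)*q' ≤ (2*s*q' - s^2*q)*p := by
      have : s * (2*q*q'*(1-s)) ≤ s * ((2*q' - s*q) * p) :=
        mul_le_mul_of_nonneg_left hpsi hs
      nlinarith [this]
    nlinarith [mul_le_mul_of_nonneg_right hE2 hp0.le]

lemma innerL (hq' : 1 ≤ q') (hq : q' + 1 ≤ q) (hp : q + 1 ≤ p) (hsuper : 2*q - q' ≤ p)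
    (hE0 : 0 ≤ E)
    (hE1 : s^2*q ≤ E*q') (hE2 : 2*s*q' - s^2*q ≤ E*q')
    (hs : 0 ≤ s) (hs1 : s ≤ 1) :
    q*s*(2-s) ≤ E*p := by
  have hq'0 : (0:ℝ) < q' := by linarith
  have hq0 : (0:ℝ) < q := by linarith
  have hp0 : (0:ℝ) < p := by linarith
  rcases le_or_gt q' (s*q) with hc | hc
  · have key : q*s*(2-s)*q' ≤ s^2*q*p := by
      nlinarith [mul_nonneg (mul_nonneg hs hq0.le) (sub_nonneg.2 hc),
        mul_nonneg (mul_nonneg (mul_nonneg hs hs) hq0.le) (by nlinarith : (0:ℝ) ≤ p - (2*q - q'))]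
    nlinarith [mul_le_mul_of_nonneg_right hE1 hp0.le]
  · have hpsi := psiL hq' hq hsuper hs hc.le
    have key : q*s*(2-s)*q' ≤ (2*s*q' - s^2*q)*p := by
      have : s * (q*q'*(2-s)) ≤ s * ((2*q' - s*q) * p) :=
        mul_le_mul_of_nonneg_left hpsi hs
      nlinarith [this]
    nlinarith [mul_le_mul_of_nonneg_right hE2 hp0.le]

/-- monotone step: bound at `s ≤ |t|` from bounds at `t`. -/
lemma mono_step (hq' : 1 ≤ q') (hq : q' + 1 ≤ q)
    (hCS : t^2*q ≤ G'*q') (hB : 2*|t| *q' - t^2*q ≤ G'*q')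
    (hs : 0 ≤ s) (hst : s ≤ |t|) :
    2*s*q' - s^2*q ≤ G'*q' := by
  have hq'0 : (0:ℝ) < q' := by linarith
  have hq0 : (0:ℝ) < q := by linarith
  rcases le_or_gt (|t| *q) q' with hc | hc
  · have h1 : 2*|t| *q' - t^2*q - (2*s*q' - s^2*q) = (|t| - s)*(2*q' - (|t| + s)*q) := by
      have ht2 : t^2 = |t|^2 := (sq_abs t).symm
      rw [ht2]; ring
    nlinarith [mul_nonneg (sub_nonneg.2 hst) (by nlinarith : (0:ℝ) ≤ 2*q' - (|t| + s)*q)]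
  · -- G'*q'*q ≥ t^2*q*q ≥ q'^2 ≥ (2*s*q' - s^2*q)*q
    have ht2 : t^2*q*q ≥ q'*q' := by
      have habs : q'*q' ≤ (|t| * q)*(|t| * q) :=
        mul_le_mul hc.le hc.le hq'0.le (by positivity)
      have heq : (|t| * q)*(|t| * q) = t^2*q*q := by rw [← sq_abs t]; ring
      linarith
    have h2 : (2*s*q' - s^2*q)*q ≤ q'*q' := by nlinarith [sq_nonneg (q' - s*q)]
    have h3 := mul_le_mul_of_nonneg_right hCS hq0.le
    have := le_trans h2 (le_trans ht2 h3)
    exact le_of_mul_le_mul_right this hq0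

lemma G_ge_abs (hq' : 1 ≤ q') (hCS : t^2*q ≤ G'*q') (hB : 2*|t| *q' - t^2*q ≤ G'*q') :
    |t| ≤ G' := by
  have hq'0 : (0:ℝ) < q' := by linarith
  have : 2*|t| *q' ≤ 2*G'*q' := by nlinarith
  nlinarith

lemma keyB (hq' : 1 ≤ q') (hq : q' + 1 ≤ q) (hp : q + 1 ≤ p) (hsuper : 2*q - q' ≤ p)
    (hG0 : 0 ≤ G') (hCS : t^2*q ≤ G'*q') (hB : 2*|t| *q' - t^2*q ≤ G'*q')
    (hint : ∃ z : ℤ, (z : ℝ) = u1) :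
    2*q*|u1 + t| ≤ 2*q*(u1 + t)^2 + G'*p := by
  have hq0 : (0:ℝ) < q := by linarith
  have hp0 : (0:ℝ) < p := by linarith
  set c := u1 + t with hc
  rcases le_or_gt 1 (|c|) with h1 | h1
  · have h2 : |c| ≤ c^2 := by nlinarith [sq_abs c, mul_le_mul_of_nonneg_left h1 (abs_nonneg c)]
    nlinarith [mul_le_mul_of_nonneg_left h2 (by positivity : (0:ℝ) ≤ 2*q), mul_nonneg hG0 hp0.le]
  · obtain ⟨z, hz⟩ := hint
    rcases eq_or_ne z 0 with rfl | hz0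
    · -- u1 = 0, c = t
      have hu0 : u1 = 0 := by exact_mod_cast hz.symm
      have hct : c = t := by rw [hc, hu0, zero_add]
      have hinner := innerB hq' hq hp hsuper hG0
        (by rw [← sq_abs t] at hCS; exact hCS)
        (by rw [← sq_abs t] at hB; exact hB) (abs_nonneg t) (by rw [← hct]; exact h1.le)
      rw [hct]
      nlinarith [sq_abs t]
    · -- |u1| ≥ 1
      have hu1 : (1:ℝ) ≤ |u1| := by
        rw [← hz, ← Int.cast_abs]
        exact_mod_cast Int.one_le_abs hz0
      set s := 1 - |c| with hs
      have hs0 : 0 ≤ s := by rw [hs]; linarith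
      have hs1 : s ≤ 1 := by rw [hs]; nlinarith [abs_nonneg c]
      have hst : s ≤ |t| := by
        have : |u1| - |c| ≤ |u1 - c| := abs_sub_abs_le_abs_sub u1 c
        have h2 : u1 - c = -t := by rw [hc]; ring
        rw [h2, abs_neg] at this
        rw [hs]; linarith
      have hE1 : s^2*q ≤ G'*q' := by
        have h2 : s^2 ≤ t^2 := by
          nlinarith [mul_le_mul hst hst hs0 (abs_nonneg t), sq_abs t]
        calc s^2*q ≤ t^2*q := by nlinarith [mul_le_mul_of_nonneg_right h2 hq0.le]
        _ ≤ G'*q' := hCS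
      have hE2 := mono_step hq' hq hCS hB hs0 hst
      have hinner := innerB hq' hq hp hsuper hG0 hE1 hE2 hs0 hs1
      have hkey : 2*q*|c| - 2*q*(c)^2 = 2*q*s*(1-s) := by
        have : c^2 = |c|^2 := (sq_abs c).symm
        rw [this, hs]; ring
      linarith [hinner, hkey.le, hkey.ge]

lemma keyL (hq' : 1 ≤ q') (hq : q' + 1 ≤ q) (hp : q + 1 ≤ p) (hsuper : 2*q - q' ≤ p)
    (hG0 : 0 ≤ G') (hCS : t^2*q ≤ G'*q') (hB : 2*|t| *q' - t^2*q ≤ G'*q')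
    (hu1 : 1 ≤ |u1|) :
    q ≤ q*(u1 + t)^2 + G'*p := by
  have hq0 : (0:ℝ) < q := by linarith
  have hp0 : (0:ℝ) < p := by linarith
  set c := u1 + t with hc
  rcases le_or_gt 1 (|c|) with h1 | h1
  · have h2 : (1:ℝ) ≤ c^2 := by
      nlinarith [sq_abs c, mul_le_mul h1 h1 (by norm_num) (abs_nonneg c)]
    nlinarith [mul_le_mul_of_nonneg_left h2 hq0.le, mul_nonneg hG0 hp0.le]
  · set s := 1 - |c| with hs
    have hs0 : 0 ≤ s := by rw [hs]; linarith
    have hs1 : s ≤ 1 := by rw [hs]; nlinarith [abs_nonneg c]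
    have hst : s ≤ |t| := by
      have : |u1| - |c| ≤ |u1 - c| := abs_sub_abs_le_abs_sub u1 c
      have h2 : u1 - c = -t := by rw [hc]; ring
      rw [h2, abs_neg] at this
      rw [hs]; linarith
    have hE1 : s^2*q ≤ G'*q' := by
      have h2 : s^2 ≤ t^2 := by
        nlinarith [mul_le_mul hst hst hs0 (abs_nonneg t), sq_abs t]
      calc s^2*q ≤ t^2*q := by nlinarith [mul_le_mul_of_nonneg_right h2 hq0.le]
      _ ≤ G'*q' := hCS
    have hE2 := mono_step hq' hq hCS hB hs0 hst
    have hinner := innerL hq' hq hp hsuper hG0 hE1 hE2 hs0 hs1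
    have hkey : q - q*c^2 = q*s*(2-s) := by
      have : c^2 = |c|^2 := (sq_abs c).symm
      rw [this, hs]; ring
    linarith [hinner, hkey.le, hkey.ge]

lemma keyLeq (hq' : 1 ≤ q') (hq : q' + 1 ≤ q) (hp : q + 1 ≤ p) (hsuper : 2*q - q' ≤ p)
    (hG0 : 0 ≤ G') (hCS : t^2*q ≤ G'*q') (hB : 2*|t| *q' - t^2*q ≤ G'*q')
    (hu1 : 2 ≤ |u1|) :
    q < q*(u1 + t)^2 + G'*p := by
  have hq0 : (0:ℝ) < q := by linarith
  have hp0 : (0:ℝ) < p := by linarith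
  have hG : |t| ≤ G' := G_ge_abs hq' hCS hB
  rcases le_or_gt 1 (|t|) with h1 | h1
  · -- G' ≥ 1 : G'*p ≥ p > q
    nlinarith [sq_nonneg (u1 + t), mul_le_mul_of_nonneg_right h1 hp0.le,
      mul_le_mul_of_nonneg_right hG hp0.le]
  · have hct : 2 - |t| ≤ |u1 + t| := by
      have := abs_sub_abs_le_abs_sub u1 (-t)
      simp only [sub_neg_eq_add, abs_neg] at this
      linarith
    have hc1 : (1:ℝ) < 2 - |t| := by linarith
    have hsq : (2 - |t|)^2 ≤ (u1+t)^2 := by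
      nlinarith [sq_abs (u1+t), abs_nonneg (u1+t)]
    nlinarith [mul_le_mul_of_nonneg_right hG hp0.le,
      mul_le_mul_of_nonneg_left hsq hq0.le,
      mul_nonneg (abs_nonneg t) hp0.le,
      mul_pos (mul_pos hq0 (by linarith : (0:ℝ) < 1 - |t|)) (by linarith : (0:ℝ) < 3 - |t|)]

end Key

lemma int_abs_le_sq (z : ℤ) : |(z:ℝ)| ≤ (z:ℝ)^2 := by
  rcases eq_or_ne z 0 with rfl | hz
  · simp
  · have h1 : (1:ℝ) ≤ |(z:ℝ)| := by
      rw [← Int.cast_abs]; exact_mod_cast Int.one_le_abs hz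
    nlinarith [sq_abs (z:ℝ), abs_nonneg (z:ℝ)]

/-- Integer lower bound (Lemma B), multiplied form. -/
lemma lG_intbound : ∀ (l : List ℤ) (u : List ℤ), (∀ b ∈ l, 2 ≤ b) →
    2 * |lT l (u.map (Int.cast : ℤ → ℝ))| * (D l.tail : ℝ) ≤
      lG l (u.map Int.cast) * (D l.tail : ℝ) + (lT l (u.map Int.cast))^2 * (D l : ℝ) := by
  intro l
  induction l with
  | nil => intro u _; simp
  | cons A t ih =>
    intro u h2
    cases u with
    | nil => simp
    | cons u1 v =>
      have ht2 := h2_tail h2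
      have hq0 : (0:ℝ) < (D t : ℝ) := DR_pos ht2
      have hp0 : (0:ℝ) < (D (A :: t) : ℝ) := DR_pos h2
      simp only [List.map_cons, lT_cons, lG_cons, List.tail_cons]
      set q : ℝ := (D t : ℝ) with hqdef
      set p : ℝ := (D (A :: t) : ℝ) with hpdef
      set r : ℝ := q / p with hrdef
      have hr0 : 0 ≤ r := by positivity
      have hr : r * p = q := by rw [hrdef]; exact div_mul_cancel₀ q hp0.ne'
      set tv : ℝ := lT t (v.map Int.cast) with htv
      set c : ℝ := (u1 : ℝ) + tv with hcdef
      set G' : ℝ := lG t (v.map Int.cast) with hG'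
      have habs : |r * c| = r * |c| := by rw [abs_mul, abs_of_nonneg hr0]
      have e1 : (r*c)^2 * p = r*c^2*q := by rw [← hr]; ring
      have e3 : r*(G'*p) = G'*q := by rw [← hr]; ring
      have hkey : 2*q*|c| ≤ 2*q*c^2 + G'*p := by
        cases t with
        | nil =>
          have hc : c = (u1:ℝ) := by rw [hcdef, htv]; simp
          have := int_abs_le_sq u1
          have hG'0 : G' = 0 := by rw [hG']; simp
          have hq1 : q = 1 := by rw [hqdef]; simp [D_nil]
          rw [hc, hG'0, hq1]
          nlinarith
        | cons B s =>
          have hq'1 : (1:ℤ) ≤ D (B :: s).tail := D_pos (h2_tail ht2)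
          have hqq' : D (B :: s).tail + 1 ≤ D (B :: s) := D_tail_lt ht2 (by simp)
          have hpq : D (B :: s) + 1 ≤ D (A :: B :: s) := by
            have := D_tail_lt h2 (l := A :: B :: s) (by simp)
            simpa using this
          have hsup : 2 * D (B :: s) - D (B :: s).tail ≤ D (A :: B :: s) := D_super h2
          have hG0 : 0 ≤ G' := lG_nonneg _ _ ht2
          have hCS : tv^2 * q ≤ G' * (D (B :: s).tail : ℝ) := by
            have := lG_cs (B :: s) (v.map Int.cast) ht2
            rw [← htv, ← hG'] at this
            exact this
          have hBr : 2*|tv| * (D (B :: s).tail : ℝ) - tv^2 * q ≤ G' * (D (B :: s).tail : ℝ) := by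
            have := ih v ht2
            rw [← htv, ← hG'] at this
            linarith
          exact keyB (q' := (D (B :: s).tail : ℝ))
            (by exact_mod_cast hq'1)
            (by rw [hqdef]; exact_mod_cast hqq')
            (by rw [hqdef, hpdef]; exact_mod_cast hpq)
            (by rw [hqdef, hpdef]; push_cast; exact_mod_cast hsup)
            hG0 hCS hBr ⟨u1, rfl⟩
      have e2 := mul_le_mul_of_nonneg_left hkey hr0
      rw [habs]
      nlinarith [e2, e1, e3]

/-- main lemma (L) : lower bound and equality case. -/
lemma lG_main (A : ℤ) (t : List ℤ) (u1 : ℤ) (v : List ℤ)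
    (h2 : ∀ b ∈ A :: t, 2 ≤ b) (hu1 : u1 ≠ 0) :
    (D t : ℝ) ≤ lG (A :: t) ((u1 :: v).map Int.cast) * (D (A :: t) : ℝ) ∧
    (lG (A :: t) ((u1 :: v).map Int.cast) * (D (A :: t) : ℝ) ≤ (D t : ℝ) →
      u1 = 1 ∨ u1 = -1) := by
  have ht2 := h2_tail h2
  have hq0 : (0:ℝ) < (D t : ℝ) := DR_pos ht2
  have hp0 : (0:ℝ) < (D (A :: t) : ℝ) := DR_pos h2
  simp only [List.map_cons, lG_cons, lT_cons]
  set q : ℝ := (D t : ℝ) with hqdef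
  set p : ℝ := (D (A :: t) : ℝ) with hpdef
  set tv : ℝ := lT t (v.map Int.cast) with htv
  set c : ℝ := (u1 : ℝ) + tv with hcdef
  set G' : ℝ := lG t (v.map Int.cast) with hG'
  have hGp : (q/p * c^2 + G') * p = q*c^2 + G'*p := by field_simp; try ring
  rw [hGp]
  have hu1R : (1:ℝ) ≤ |(u1:ℝ)| := by
    rw [← Int.cast_abs]; exact_mod_cast Int.one_le_abs hu1
  cases t with
  | nil =>
    have hc : c = (u1:ℝ) := by rw [hcdef, htv]; simp
    have hG'0 : G' = 0 := by rw [hG']; simp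
    have hq1 : q = 1 := by rw [hqdef]; simp [D_nil]
    rw [hc, hG'0, hq1]
    constructor
    · nlinarith [sq_abs (u1:ℝ)]
    · intro hle
      have hr1 : (u1:ℝ)^2 ≤ 1 := by linarith
      have h2' : u1^2 ≤ 1 := by exact_mod_cast hr1
      have hge := Int.one_le_abs hu1
      have hle1 : |u1| ≤ 1 := by nlinarith [sq_abs u1, abs_nonneg u1]
      exact (abs_eq (by norm_num)).mp (le_antisymm hle1 hge)
  | cons B s =>
    have hq'1 : (1:ℤ) ≤ D (B :: s).tail := D_pos (h2_tail ht2)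
    have hqq' : D (B :: s).tail + 1 ≤ D (B :: s) := D_tail_lt ht2 (by simp)
    have hpq : D (B :: s) + 1 ≤ D (A :: B :: s) := by
      have := D_tail_lt h2 (l := A :: B :: s) (by simp)
      simpa using this
    have hsup : 2 * D (B :: s) - D (B :: s).tail ≤ D (A :: B :: s) := D_super h2
    have hG0 : 0 ≤ G' := lG_nonneg _ _ ht2
    have hCS : tv^2 * q ≤ G' * (D (B :: s).tail : ℝ) := by
      have := lG_cs (B :: s) (v.map Int.cast) ht2
      rw [← htv, ← hG'] at this
      exact this
    have hBr : 2*|tv| * (D (B :: s).tail : ℝ) - tv^2 * q ≤ G' * (D (B :: s).tail : ℝ) := by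
      have := lG_intbound (B :: s) v ht2
      rw [← htv, ← hG'] at this
      linarith
    have harg1 : (1:ℝ) ≤ (D (B :: s).tail : ℝ) := by exact_mod_cast hq'1
    have harg2 : (D (B :: s).tail : ℝ) + 1 ≤ q := by rw [hqdef]; exact_mod_cast hqq'
    have harg3 : q + 1 ≤ p := by rw [hqdef, hpdef]; exact_mod_cast hpq
    have harg4 : 2*q - (D (B :: s).tail : ℝ) ≤ p := by
      rw [hqdef, hpdef]; push_cast; exact_mod_cast hsup
    constructor
    · exact keyL harg1 harg2 harg3 harg4 hG0 hCS hBr hu1R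
    · intro hle
      by_contra hcon
      push_neg at hcon
      obtain ⟨hne1, hnem1⟩ := hcon
      have h2a : 2 ≤ |u1| := by
        rcases le_or_gt 0 u1 with h | h
        · rw [abs_of_nonneg h]; omega
        · rw [abs_of_neg h]; omega
      have h2R : (2:ℝ) ≤ |(u1:ℝ)| := by
        rw [← Int.cast_abs]; exact_mod_cast h2a
      have hlt := keyLeq harg1 harg2 harg3 harg4 hG0 hCS hBr h2R
      rw [← hcdef] at hlt
      linarith

lemma ldot_ofFn : ∀ (n : ℕ) (f g : Fin n → ℝ),
    ldot (List.ofFn f) (List.ofFn g) = ∑ j, f j * g j := by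
  intro n
  induction n with
  | zero => intro f g; simp
  | succ m ih =>
    intro f g
    rw [List.ofFn_succ, List.ofFn_succ, ldot_cons, Fin.sum_univ_succ, ih]

lemma ldot_getD : ∀ (n : ℕ) (f : Fin n → ℝ) (w : List ℝ), w.length = n →
    ∑ j : Fin n, f j * w.getD (j : ℕ) 0 = ldot (List.ofFn f) w := by
  intro n
  induction n with
  | zero => intro f w h; simp
  | succ m ih =>
    intro f w h
    cases w with
    | nil => simp at h
    | cons y ys =>
      rw [List.ofFn_succ, ldot_cons, Fin.sum_univ_succ]
      simp only [List.getD_cons_zero, Fin.val_succ, List.getD_cons_succ, Fin.val_zero]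
      rw [ih (fun j => f j.succ) ys (by simpa using h)]

lemma lA_length : ∀ (lz : List ℤ) (x : List ℝ), x.length = lz.length →
    (lA lz x).length = lz.length := by
  intro lz
  induction lz with
  | nil => intro x h; simp
  | cons A t ih =>
    intro x h
    cases x with
    | nil => simp at h
    | cons x1 xs =>
      simp only [lA_cons, List.length_cons, af_length]
      rw [ih xs (by simpa using h)]

lemma af_getD (s : ℝ) : ∀ (w : List ℝ) (j : ℕ), j < w.length →
    (af s w).getD j 0 = w.getD j 0 + if j = 0 then s else 0 := by
  intro w j hj
  cases w with
  | nil => simp at hj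
  | cons y ys =>
    cases j with
    | zero => simp
    | succ i => simp

lemma getD_ofFn {n : ℕ} (g : Fin n → ℝ) (j : Fin n) :
    (List.ofFn g).getD (j : ℕ) 0 = g j := by
  rw [List.getD_eq_getElem _ _ (by simp [j.isLt])]
  simp

lemma ofFn_getD {n : ℕ} (w : List ℝ) (h : w.length = n) :
    List.ofFn (fun j : Fin n => w.getD (j : ℕ) 0) = w := by
  apply List.ext_getElem (by simp [h])
  intro i h1 h2
  simp only [List.getElem_ofFn]
  rw [List.getD_eq_getElem _ _ h2]

lemma headI_ofFn {n : ℕ} (h : 0 < n) (g : Fin n → ℤ) :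
    (List.ofFn g).headI = g ⟨0, h⟩ := by
  cases n with
  | zero => omega
  | succ m => rw [List.ofFn_succ]; rfl

lemma tridiag_succ_succ {n : ℕ} (a : Fin (n+1) → ℤ) (i j : Fin n) :
    tridiag a i.succ j.succ = tridiag (fun t => a t.succ) i j := by
  simp only [tridiag, Matrix.of_apply, Fin.val_succ, Fin.succ_inj]
  by_cases h : i = j
  · simp [h]
  · simp only [h, if_false]
    congr 1
    simp only [eq_iff_iff]
    omega

lemma tridiag_zero_succ {n : ℕ} (a : Fin (n+1) → ℤ) (j : Fin n) :
    tridiag a 0 j.succ = if (j : ℕ) = 0 then -1 else 0 := by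
  simp only [tridiag, Matrix.of_apply]
  rw [if_neg (Fin.succ_ne_zero j).symm ]
  congr 1
  simp only [eq_iff_iff, Fin.val_succ, Fin.val_zero]
  omega

lemma tridiag_succ_zero {n : ℕ} (a : Fin (n+1) → ℤ) (j : Fin n) :
    tridiag a j.succ 0 = if (j : ℕ) = 0 then -1 else 0 := by
  simp only [tridiag, Matrix.of_apply]
  rw [if_neg (Fin.succ_ne_zero j)]
  congr 1
  simp only [eq_iff_iff, Fin.val_succ, Fin.val_zero]
  omega

@[simp] lemma tridiag_diag {n : ℕ} (a : Fin n → ℤ) (j : Fin n) :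
    tridiag a j j = a j := by
  simp [tridiag]

lemma MV : ∀ (n : ℕ) (a : Fin n → ℤ) (f : Fin n → ℝ) (j : Fin n),
    (∑ j', ((tridiag a j j' : ℤ) : ℝ) * f j') = (lA (List.ofFn a) (List.ofFn f)).getD (j : ℕ) 0 := by
  intro n
  induction n with
  | zero => intro a f j; exact absurd j.isLt (by omega)
  | succ m ih =>
    intro a f j
    induction j using Fin.cases with
    | zero =>
      rw [Fin.sum_univ_succ]
      simp only [tridiag_diag]
      have hrest : ∑ j'' : Fin m, ((tridiag a 0 j''.succ : ℤ) : ℝ) * f j''.succ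
          = -(List.ofFn (fun t : Fin m => f t.succ)).headI := by
        cases m with
        | zero => simp
        | succ r =>
          rw [Fin.sum_univ_succ, List.ofFn_succ]
          simp only [tridiag_zero_succ, Fin.val_zero, Fin.val_succ, List.headI_cons]
          rw [Finset.sum_eq_zero (fun x _ => by simp)]
          norm_num
      rw [hrest]
      rw [List.ofFn_succ, List.ofFn_succ, lA_cons]
      simp only [Fin.val_zero, List.getD_cons_zero]
      ring
    | succ k =>
      rw [Fin.sum_univ_succ]
      have h1 : ((tridiag a k.succ 0 : ℤ) : ℝ) * f 0 = if (k:ℕ) = 0 then -f 0 else 0 := by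
        rw [tridiag_succ_zero]
        split_ifs <;> norm_num
      have h2 : ∑ j'' : Fin m, ((tridiag a k.succ j''.succ : ℤ) : ℝ) * f j''.succ
          = (lA (List.ofFn (fun t => a t.succ)) (List.ofFn (fun t => f t.succ))).getD (k : ℕ) 0 := by
        rw [← ih (fun t => a t.succ) (fun t => f t.succ) k]
        apply Finset.sum_congr rfl
        intro x _
        rw [tridiag_succ_succ]
      rw [h1, h2, List.ofFn_succ, List.ofFn_succ, lA_cons]
      have hlen : (lA (List.ofFn fun t : Fin m => a t.succ) (List.ofFn fun t : Fin m => f t.succ)).length = m := by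
        rw [lA_length] <;> simp
      simp only [Fin.val_succ, List.getD_cons_succ]
      rw [af_getD _ _ _ (by rw [hlen]; exact k.isLt)]
      split_ifs <;> ring

lemma lG_main' (lz : List ℤ) (u : List ℤ) (h2 : ∀ b ∈ lz, 2 ≤ b)
    (hlnil : lz ≠ []) (hunil : u ≠ []) (hu1 : u.headI ≠ 0) :
    (D lz.tail : ℝ) ≤ lG lz (u.map Int.cast) * (D lz : ℝ) ∧
    (lG lz (u.map Int.cast) * (D lz : ℝ) ≤ (D lz.tail : ℝ) → u.headI = 1 ∨ u.headI = -1) := by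
  cases lz with
  | nil => simp at hlnil
  | cons A t =>
    cases u with
    | nil => simp at hunil
    | cons u1 v =>
      simpa using lG_main A t u1 v h2 (by simpa using hu1)


/-- If the linear-chain lattice embeds into a standard diagonal lattice
(`M·Mᵀ = Q_L`) and some coordinate (column `c`) is nonzero on the starting vertex of
every chain, then `∑ᵢ qᵢ/pᵢ ≤ 1`; if equality holds then each such entry is `±1`. -/
theorem stmt11 (k : ℕ) (hk : 1 ≤ k) (l : Fin k → ℕ) (hl : ∀ i, 1 ≤ l i)
    (a : ∀ i, Fin (l i) → ℤ) (ha : ∀ i j, 2 ≤ a i j)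
    (m : ℕ) (hm : 1 ≤ m) (M : Matrix (Σ i, Fin (l i)) (Fin m) ℤ)
    (hM : M * M.transpose = QL l a)
    (c : Fin m) (hc : ∀ i : Fin k, M ⟨i, ⟨0, hl i⟩⟩ c ≠ 0) :
    (∑ i : Fin k, (D (List.ofFn (a i)).tail : ℝ) / (D (List.ofFn (a i)) : ℝ)) ≤ 1 ∧
    ((∑ i : Fin k, (D (List.ofFn (a i)).tail : ℝ) / (D (List.ofFn (a i)) : ℝ)) = 1 →
      ∀ i : Fin k, M ⟨i, ⟨0, hl i⟩⟩ c = 1 ∨ M ⟨i, ⟨0, hl i⟩⟩ c = -1) := by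
  classical
  have h2 : ∀ i, ∀ b ∈ List.ofFn (a i), 2 ≤ b := by
    intro i b hb
    simp only [List.mem_ofFn, Set.mem_range] at hb
    obtain ⟨j, rfl⟩ := hb
    exact ha i j
  set uR : Fin k → List ℝ := fun i => List.ofFn (fun j => ((M ⟨i, j⟩ c : ℤ) : ℝ)) with huR
  have hlenu : ∀ i, (uR i).length = (List.ofFn (a i)).length := by intro i; simp [huR]
  set xL : Fin k → List ℝ := fun i => lX (List.ofFn (a i)) (uR i) with hxL
  have hxlen : ∀ i, (xL i).length = l i := by
    intro i; rw [hxL]; simpa using lX_length _ _ (hlenu i)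
  set xf : ∀ i, Fin (l i) → ℝ := fun i j => (xL i).getD (j : ℕ) 0 with hxf
  have hofn : ∀ i, List.ofFn (xf i) = xL i := fun i => ofFn_getD _ (hxlen i)
  have hsolve : ∀ i, lA (List.ofFn (a i)) (xL i) = uR i :=
    fun i => lX_solve _ _ (h2 i) (hlenu i)
  have hdotG : ∀ i, ldot (xL i) (uR i) = lG (List.ofFn (a i)) (uR i) :=
    fun i => lX_dot _ _ (h2 i) (hlenu i)
  set G : Fin k → ℝ := fun i => lG (List.ofFn (a i)) (uR i) with hGdef
  have hQL : ∀ n n' : (Σ i, Fin (l i)),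
      (∑ d : Fin m, (M n d : ℝ) * (M n' d : ℝ)) = ((QL l a) n n' : ℝ) := by
    intro n n'
    have h := congrFun (congrFun hM n) n'
    rw [Matrix.mul_apply] at h
    simp only [Matrix.transpose_apply] at h
    rw [← h]
    push_cast
    rfl
  have hQLsame : ∀ (i : Fin k) (j j' : Fin (l i)),
      (QL l a ⟨i, j⟩ ⟨i, j'⟩) = tridiag (a i) j j' := by
    intro i j j'
    show dite _ _ _ = _
    rw [dif_pos rfl]
    congr 1
  have hQLdiff : ∀ (i i' : Fin k) (j : Fin (l i)) (j' : Fin (l i')), i ≠ i' →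
      (QL l a ⟨i, j⟩ ⟨i', j'⟩) = 0 := by
    intro i i' j j' hne
    show dite _ _ _ = _
    rw [dif_neg]
    exact hne
  have hperblock : ∀ i : Fin k,
      (∑ j : Fin (l i), ∑ j' : Fin (l i),
        (xf i j * xf i j') * ((tridiag (a i) j j' : ℤ) : ℝ)) = G i := by
    intro i
    have hstep : ∀ j : Fin (l i),
        (∑ j' : Fin (l i), (xf i j * xf i j') * ((tridiag (a i) j j' : ℤ) : ℝ))
        = xf i j * ((uR i).getD (j : ℕ) 0) := by
      intro j
      have hmv := MV (l i) (a i) (xf i) j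
      rw [hofn i, hsolve i] at hmv
      rw [← hmv, Finset.mul_sum]
      apply Finset.sum_congr rfl
      intro x _
      ring
    rw [Finset.sum_congr rfl (fun j _ => hstep j)]
    rw [ldot_getD _ _ _ (by rw [hlenu i]; simp), hofn i, hdotG i]
  set y : (Σ i, Fin (l i)) → ℝ := fun n => xf n.1 n.2 with hy
  set z : Fin m → ℝ := fun d => ∑ n, y n * ((M n d : ℤ) : ℝ) with hz
  have hzc : z c = ∑ i, G i := by
    show (∑ n : (Σ i, Fin (l i)), y n * ((M n c : ℤ) : ℝ)) = ∑ i, G i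
    rw [← Finset.univ_sigma_univ, Finset.sum_sigma]
    apply Finset.sum_congr rfl
    intro i _
    have h4 : ∀ j : Fin (l i), y ⟨i, j⟩ * ((M ⟨i, j⟩ c : ℤ) : ℝ)
        = xf i j * ((uR i).getD (j : ℕ) 0) := by
      intro j
      have hgd : ((M ⟨i, j⟩ c : ℤ) : ℝ) = (uR i).getD (j : ℕ) 0 := by
        show ((M ⟨i, j⟩ c : ℤ) : ℝ)
          = (List.ofFn (fun j => ((M ⟨i, j⟩ c : ℤ) : ℝ))).getD (j : ℕ) 0
        exact (getD_ofFn (fun t => ((M ⟨i, t⟩ c : ℤ) : ℝ)) j).symm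
      rw [← hgd]
    rw [Finset.sum_congr rfl (fun j _ => h4 j)]
    rw [ldot_getD _ _ _ (by rw [hlenu i]; simp), hofn i, hdotG i]
  have hzsq : (∑ d, z d ^ 2) = ∑ i, G i := by
    have h1 : ∀ d, z d ^ 2 = ∑ n, ∑ n', (y n * ((M n d : ℤ):ℝ)) * (y n' * ((M n' d : ℤ):ℝ)) := by
      intro d
      show (∑ n : (Σ i, Fin (l i)), y n * ((M n d : ℤ) : ℝ)) ^ 2 = _
      rw [sq, Finset.sum_mul_sum]
    rw [Finset.sum_congr rfl fun d _ => h1 d]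
    rw [Finset.sum_comm]
    have h2' : ∀ n, (∑ d : Fin m, ∑ n', (y n * ((M n d : ℤ):ℝ)) * (y n' * ((M n' d : ℤ):ℝ)))
        = ∑ n', (y n * y n') * ((QL l a) n n' : ℝ) := by
      intro n
      rw [Finset.sum_comm]
      apply Finset.sum_congr rfl
      intro n' _
      rw [← hQL n n', Finset.mul_sum]
      apply Finset.sum_congr rfl (fun d _ => by ring)
    rw [Finset.sum_congr rfl fun n _ => h2' n]
    set W : (Σ i, Fin (l i)) → ℝ :=
      fun nn => ∑ n', (y nn * y n') * ((QL l a) nn n' : ℝ) with hW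
    rw [← Finset.univ_sigma_univ, Finset.sum_sigma]
    apply Finset.sum_congr rfl
    intro i _
    have h3 : ∀ j : Fin (l i),
        W ⟨i, j⟩ = ∑ j' : Fin (l i), (xf i j * xf i j') * ((tridiag (a i) j j' : ℤ) : ℝ) := by
      intro j
      show (∑ n' : (Σ i, Fin (l i)), (y ⟨i, j⟩ * y n') * ((QL l a) ⟨i, j⟩ n' : ℝ)) = _
      rw [← Finset.univ_sigma_univ, Finset.sum_sigma]
      rw [Finset.sum_eq_single_of_mem i (Finset.mem_univ i)]
      · apply Finset.sum_congr rfl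
        intro j' _
        rw [hQLsame i j j']
      · intro b _ hb
        apply Finset.sum_eq_zero
        intro j' _
        rw [hQLdiff i b j j' (Ne.symm hb)]
        simp
    rw [Finset.sum_congr rfl fun j _ => h3 j]
    exact hperblock i
  have hsumG : (∑ i, G i) ≤ 1 := by
    have key : (0:ℝ) ≤ ∑ d : Fin m, ((if d = c then (1:ℝ) else 0) - z d) ^ 2 :=
      Finset.sum_nonneg fun d _ => sq_nonneg _
    have h1 : ∀ d : Fin m, ((if d = c then (1:ℝ) else 0) - z d) ^ 2
        = ((if d = c then (1:ℝ) else 0) - 2 * (if d = c then z d else 0)) + z d ^ 2 := by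
      intro d; split_ifs <;> ring
    have e1 : (∑ d : Fin m, ((if d = c then (1:ℝ) else 0) - z d) ^ 2)
        = ((∑ d : Fin m, (if d = c then (1:ℝ) else 0))
            - ∑ d : Fin m, 2 * (if d = c then z d else 0)) + ∑ d, z d ^ 2 := by
      rw [Finset.sum_congr rfl fun d _ => h1 d, Finset.sum_add_distrib, Finset.sum_sub_distrib]
    have e2 : (∑ d : Fin m, (if d = c then (1:ℝ) else 0)) = 1 := by simp
    have e3 : (∑ d : Fin m, 2 * (if d = c then z d else 0)) = 2 * z c := by
      rw [← Finset.mul_sum]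
      congr 1
      simp
    rw [e1, e2, e3, hzc, hzsq] at key
    linarith
  have hDpos : ∀ i, (0:ℝ) < ((D (List.ofFn (a i)) : ℤ) : ℝ) := fun i => DR_pos (h2 i)
  have hmain : ∀ i, ((D (List.ofFn (a i)).tail : ℤ) : ℝ) ≤ G i * ((D (List.ofFn (a i)) : ℤ) : ℝ) ∧
      (G i * ((D (List.ofFn (a i)) : ℤ) : ℝ) ≤ ((D (List.ofFn (a i)).tail : ℤ) : ℝ) →
        M ⟨i, ⟨0, hl i⟩⟩ c = 1 ∨ M ⟨i, ⟨0, hl i⟩⟩ c = -1) := by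
    intro i
    have hu : uR i = (List.ofFn (fun j => M ⟨i, j⟩ c)).map (Int.cast : ℤ → ℝ) := by
      rw [huR, List.map_ofFn]
      rfl
    have hanil : List.ofFn (a i) ≠ [] := by
      intro h
      have := congrArg List.length h
      simp at this
      have := hl i
      omega
    have hunil : List.ofFn (fun j => M ⟨i, j⟩ c) ≠ [] := by
      intro h
      have := congrArg List.length h
      simp at this
      have := hl i
      omega
    have hhead : (List.ofFn (fun j => M ⟨i, j⟩ c)).headI = M ⟨i, ⟨0, hl i⟩⟩ c :=
      headI_ofFn (hl i) _
    have h5 := lG_main' (List.ofFn (a i)) (List.ofFn (fun j => M ⟨i, j⟩ c)) (h2 i)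
      hanil hunil (by rw [hhead]; exact hc i)
    rw [← hu, hhead] at h5
    exact h5
  have hfrac : ∀ i, ((D (List.ofFn (a i)).tail : ℤ) : ℝ) / ((D (List.ofFn (a i)) : ℤ) : ℝ) ≤ G i := by
    intro i
    rw [div_le_iff₀ (hDpos i)]
    exact (hmain i).1
  constructor
  · calc (∑ i : Fin k, (D (List.ofFn (a i)).tail : ℝ) / (D (List.ofFn (a i)) : ℝ))
        ≤ ∑ i, G i := Finset.sum_le_sum (fun i _ => hfrac i)
      _ ≤ 1 := hsumG
  · intro heq i
    have h7 : ∀ j ∈ Finset.univ, (0:ℝ) ≤ G j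
        - ((D (List.ofFn (a j)).tail : ℤ) : ℝ) / ((D (List.ofFn (a j)) : ℤ) : ℝ) :=
      fun j _ => by linarith [hfrac j]
    have h6 : (∑ j, (G j
        - ((D (List.ofFn (a j)).tail : ℤ) : ℝ) / ((D (List.ofFn (a j)) : ℤ) : ℝ))) = 0 := by
      rw [Finset.sum_sub_distrib, heq]
      have := Finset.sum_nonneg h7
      rw [Finset.sum_sub_distrib, heq] at this
      linarith
    have h8 := (Finset.sum_eq_zero_iff_of_nonneg h7).1 h6 i (Finset.mem_univ i)
    apply (hmain i).2
    have h9 : G i * ((D (List.ofFn (a i)) : ℤ) : ℝ)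
        = ((D (List.ofFn (a i)).tail : ℤ) : ℝ) := by
      have hG : G i = ((D (List.ofFn (a i)).tail : ℤ) : ℝ) / ((D (List.ofFn (a i)) : ℤ) : ℝ) := by
        linarith
      rw [hG, div_mul_cancel₀]
      exact ne_of_gt (hDpos i)
    exact le_of_eq h9
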